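/- arXiv:math/0302263 — 2 statements merged into one kernel-verified Lean document; each statement's English description precedes it below -/
import Mathlib

section
/- Let P(t) = 1 + d₁t + ... + d_{n-1}t^{n-1} + t^n, A(t) = a₀ + ... + a_{n-1}t^{n-1}, B(t) = b₀ + ... + b_{n-1}t^{n-1} be polynomials with non-negative real coefficients. Then there is no polynomial S(t) with non-negative coefficients satisfying t^n P(t) + t^{n+1} A(t) + B(t) = P(t)² + (1+t) S(t). -/
open Polynomial

/-- The Morse–Bott contradiction in the spherical case. If
P(t) = 1 + d₁t + ⋯ + t^n, A(t), B(t) are polynomials with non-negative coefficients,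
deg A, deg B ≤ n − 1, then there is no polynomial S with non-negative coefficients with
t^n P(t) + t^{n+1} A(t) + B(t) = P(t)² + (1+t) S(t). -/
theorem no_morse_bott_solution (n : ℕ) (hn : 1 ≤ n)
    (P A B : Polynomial ℝ)
    (hP0 : P.coeff 0 = 1) (hPn : P.coeff n = 1) (hPdeg : P.natDegree = n)
    (hPpos : ∀ k, 0 ≤ P.coeff k)
    (hApos : ∀ k, 0 ≤ A.coeff k) (hAdeg : A.natDegree ≤ n - 1)
    (hBpos : ∀ k, 0 ≤ B.coeff k) (hBdeg : B.natDegree ≤ n - 1) :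
    ¬ ∃ S : Polynomial ℝ, (∀ k, 0 ≤ S.coeff k) ∧
        X ^ n * P + X ^ (n + 1) * A + B = P ^ 2 + (1 + X) * S := by
  rintro ⟨S, hSpos, hEq⟩
  have hcoeff := congrArg (fun p => Polynomial.coeff p n) hEq
  simp only [coeff_add, coeff_X_pow_mul] at hcoeff
  -- LHS pieces
  have hA0 : (X ^ (n + 1) * A).coeff n = 0 := by
    rw [coeff_X_pow_mul' A (n+1) n]
    simp [Nat.not_succ_le_self n]
  have hB0 : B.coeff n = 0 := by
    apply coeff_eq_zero_of_natDegree_lt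
    omega
  -- RHS lower bound for (P^2).coeff n
  have hP2 : (2 : ℝ) ≤ (P ^ 2).coeff n := by
    rw [sq, coeff_mul]
    have hsub : ({(0, n), (n, 0)} : Finset (ℕ × ℕ)) ⊆ Finset.HasAntidiagonal.antidiagonal n := by
      intro x hx
      simp only [Finset.mem_insert, Finset.mem_singleton] at hx
      rcases hx with h | h <;> simp [h]
    have hsum : ∑ p ∈ ({(0, n), (n, 0)} : Finset (ℕ × ℕ)), P.coeff p.1 * P.coeff p.2 = 2 := by
      rw [Finset.sum_pair (by simp; omega)]
      simp [hP0, hPn]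
      norm_num
    calc (2 : ℝ) = ∑ p ∈ ({(0, n), (n, 0)} : Finset (ℕ × ℕ)), P.coeff p.1 * P.coeff p.2 := hsum.symm
      _ ≤ ∑ p ∈ Finset.HasAntidiagonal.antidiagonal n, P.coeff p.1 * P.coeff p.2 :=
          Finset.sum_le_sum_of_subset_of_nonneg hsub
            (fun p _ _ => mul_nonneg (hPpos p.1) (hPpos p.2))
  -- RHS (1+X)*S coefficient is nonneg
  have hS : 0 ≤ ((1 + X) * S).coeff n := by
    have hx : (X * S).coeff n = S.coeff (n - 1) := by
      conv_lhs => rw [show n = (n - 1) + 1 by omega]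
      rw [coeff_X_mul]
    rw [add_mul, one_mul, coeff_add, hx]
    have := hSpos n
    have := hSpos (n - 1)
    positivity
  have hXP : (X ^ n * P).coeff n = 1 := by
    simpa [hP0] using coeff_X_pow_mul P n 0
  rw [hA0, hB0, hXP] at hcoeff
  linarith
end

section
/- Let γ̄ : ℝ/ℤ → ℝ² be a C¹ closed immersed curve contained in the strip {(x,y) : 0 ≤ y ≤ 1}, such that γ̄ meets both boundary lines y = 0 and y = 1. Then there exist two distinct points p, q on the image of γ̄ with the same y-coordinate, such that the tangent lines to γ̄ at p and q are parallel. -/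
/-!
Among the horizontal chords of the compact image of the curve, take one maximizing the signed
length `x(p) - x(q)`. At a highest point the tangent is horizontal, so `x` is locally injective
there while `y` folds back; this produces a horizontal chord of nonzero length, so the maximal
chord has distinct endpoints. If `y' ≠ 0` at one endpoint, the implicit function theorem lets the
chord slide along the curve, and the first-order condition for the maximum is the vanishing of
the cross product of the two tangent vectors.
-/

open Filter Topology Set

section ProdDeriv

variable {𝕜 E F : Type*} [NontriviallyNormedField 𝕜] [NormedAddCommGroup E] [NormedSpace 𝕜 E]
  [NormedAddCommGroup F] [NormedSpace 𝕜 F] {γ : 𝕜 → E × F} {v : E × F} {t : 𝕜}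

theorem HasDerivAt.fst (h : HasDerivAt γ v t) : HasDerivAt (fun u => (γ u).1) v.1 t := by
  simpa using h.hasFDerivAt.fst.hasDerivAt

theorem HasDerivAt.snd (h : HasDerivAt γ v t) : HasDerivAt (fun u => (γ u).2) v.2 t := by
  simpa using h.hasFDerivAt.snd.hasDerivAt

theorem HasStrictDerivAt.fst (h : HasStrictDerivAt γ v t) :
    HasStrictDerivAt (fun u => (γ u).1) v.1 t := by
  simpa using h.hasStrictFDerivAt.fst.hasStrictDerivAt

theorem HasStrictDerivAt.snd (h : HasStrictDerivAt γ v t) :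
    HasStrictDerivAt (fun u => (γ u).2) v.2 t := by
  simpa using h.hasStrictFDerivAt.snd.hasStrictDerivAt

end ProdDeriv

theorem HasStrictDerivAt.exists_mem_nhds_injOn {f : ℝ → ℝ} {f' t : ℝ}
    (hf : HasStrictDerivAt f f' t) (hf' : f' ≠ 0) : ∃ U ∈ 𝓝 t, InjOn f U :=
  ⟨_, hf.eventually_left_inverse hf', fun u hu v hv huv => by
    simp only [mem_ofPred_eq] at hu hv
    rw [← hu, ← hv, huv]⟩

theorem Prod.exists_eq_smul_of_mul_eq_mul {a b : ℝ × ℝ} (hb : b ≠ 0)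
    (h : a.1 * b.2 = b.1 * a.2) : ∃ c : ℝ, a = c • b := by
  by_cases hb₁ : b.1 = 0
  · have hb₂ : b.2 ≠ 0 := fun hb₂ => hb (Prod.ext hb₁ hb₂)
    refine ⟨a.2 / b.2, Prod.ext ?_ ?_⟩
    · simp_all
    · simp [hb₂]
  · refine ⟨a.1 / b.1, Prod.ext ?_ ?_⟩
    · simp [hb₁]
    · rw [Prod.smul_snd, smul_eq_mul]
      field_simp
      linarith

theorem ContinuousOn.not_injOn_Icc_of_le_of_le {f : ℝ → ℝ} {a b t : ℝ}
    (hf : ContinuousOn f (Icc a b)) (hat : a < t) (htb : t < b) (ha : f a ≤ f t) (hb : f b ≤ f t) :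
    ¬ InjOn f (Icc a b) := by
  intro hinj
  rcases hf.strictMonoOn_of_injOn_Icc' (hat.trans htb).le hinj with hmono | hanti
  · exact (hmono ⟨hat.le, htb.le⟩ ⟨(hat.trans htb).le, le_rfl⟩ htb).not_ge hb
  · exact (hanti ⟨le_rfl, (hat.trans htb).le⟩ ⟨hat.le, htb.le⟩ hat).not_ge ha

theorem exists_fst_ne_of_isLocalMax_snd {γ : ℝ → ℝ × ℝ} {t : ℝ} {w : ℝ × ℝ}
    (hγ : Continuous γ) (ht : HasStrictDerivAt γ w t) (hw : w.1 ≠ 0)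
    (hmax : IsLocalMax (fun u => (γ u).2) t) :
    ∃ u v, (γ u).2 = (γ v).2 ∧ (γ u).1 ≠ (γ v).1 := by
  obtain ⟨U, hU, hinj⟩ := ht.fst.exists_mem_nhds_injOn hw
  obtain ⟨ε, hε, hball⟩ := Metric.nhds_basis_closedBall.mem_iff.1 (inter_mem hU hmax)
  rw [Real.closedBall_eq_Icc] at hball
  have hleft : t - ε ∈ Icc (t - ε) (t + ε) := ⟨le_rfl, by linarith⟩
  have hright : t + ε ∈ Icc (t - ε) (t + ε) := ⟨by linarith, le_rfl⟩
  by_contra! hx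
  exact hγ.snd.continuousOn.not_injOn_Icc_of_le_of_le (by linarith) (by linarith)
    (hball hleft).2 (hball hright).2
    fun u hu v hv huv => hinj (hball hu).1 (hball hv).1 (hx u v huv)

def IsMaxChord (γ : ℝ → ℝ × ℝ) (s t : ℝ) : Prop :=
  (γ s).2 = (γ t).2 ∧ ∀ u v, (γ u).2 = (γ v).2 → (γ u).1 - (γ v).1 ≤ (γ s).1 - (γ t).1

theorem IsCompact.exists_isMaxChord {γ : ℝ → ℝ × ℝ} (hK : IsCompact (range γ)) :
    ∃ s t, IsMaxChord γ s t := by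
  set C := (range γ ×ˢ range γ) ∩ {pq : (ℝ × ℝ) × (ℝ × ℝ) | pq.1.2 = pq.2.2}
  have hC : IsCompact C :=
    (hK.prod hK).inter_right (isClosed_eq (by fun_prop) (by fun_prop))
  obtain ⟨⟨_, _⟩, ⟨⟨⟨s, rfl⟩, ⟨t, rfl⟩⟩, hst⟩, hmax⟩ :=
    hC.exists_isMaxOn ⟨(γ 0, γ 0), ⟨mem_range_self 0, mem_range_self 0⟩, rfl⟩
      (f := fun pq => pq.1.1 - pq.2.1) (by fun_prop)
  exact ⟨s, t, hst, fun u v huv =>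
    isMaxOn_iff.1 hmax (γ u, γ v) ⟨⟨mem_range_self u, mem_range_self v⟩, huv⟩⟩

namespace IsMaxChord

variable {γ : ℝ → ℝ × ℝ} {s t : ℝ} {v w : ℝ × ℝ}

theorem neg (h : IsMaxChord γ s t) : IsMaxChord (-γ) t s :=
  ⟨by simp [h.1], fun u v huv => by
    have := h.2 v u (by simpa using huv.symm)
    simp only [Pi.neg_apply, Prod.fst_neg]
    linarith⟩

theorem ne_of_fst_ne (h : IsMaxChord γ s t) {u v : ℝ} (huv : (γ u).2 = (γ v).2)
    (hne : (γ u).1 ≠ (γ v).1) : γ s ≠ γ t := by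
  intro heq
  have h₁ := h.2 u v huv
  have h₂ := h.2 v u huv.symm
  rw [heq, sub_self] at h₁ h₂
  exact hne (by linarith)

theorem fst_mul_snd_eq_of_snd_ne_zero (h : IsMaxChord γ s t) (hs : HasDerivAt γ v s)
    (ht : HasStrictDerivAt γ w t) (hw : w.2 ≠ 0) : v.1 * w.2 = w.1 * v.2 := by
  set x := fun u => (γ u).1
  set f := fun u => (γ u).2
  have hft : HasStrictDerivAt f w.2 t := ht.snd
  set g := hft.localInverse f w.2 t hw
  have hfst : f s = f t := h.1
  have hgs : g (f s) = t := hfst ▸ (hft.eventually_left_inverse hw).self_of_nhds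
  -- the chord from `γ u` to `γ (g (f u))` is horizontal and starts as the maximal one
  have hslide : ∀ᶠ u in 𝓝 s, f (g (f u)) = f u := by
    have hright : ∀ᶠ y in 𝓝 (f s), f (g y) = y := hfst ▸ hft.eventually_right_inverse hw
    exact hs.snd.continuousAt.eventually hright
  have hmax : IsLocalMax (fun u => x u - x (g (f u))) s :=
    hslide.mono fun u hu => by simpa [hgs] using h.2 u (g (f u)) hu.symm
  have hg : HasDerivAt g w.2⁻¹ (f s) := hfst ▸ (hft.to_localInverse hw).hasDerivAt
  have hxt : HasDerivAt x w.1 (g (f s)) := hgs ▸ ht.hasDerivAt.fst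
  have hxgf : HasDerivAt (x ∘ g ∘ f) (w.1 * (w.2⁻¹ * v.2)) s := hxt.comp s (hg.comp s hs.snd)
  have hderiv : HasDerivAt (fun u => x u - x (g (f u))) (v.1 - w.1 * (w.2⁻¹ * v.2)) s :=
    hs.fst.sub hxgf
  have hcrit := hmax.hasDerivAt_eq_zero hderiv
  field_simp at hcrit
  linarith

theorem fst_mul_snd_eq (h : IsMaxChord γ s t) (hs : HasStrictDerivAt γ v s)
    (ht : HasStrictDerivAt γ w t) : v.1 * w.2 = w.1 * v.2 := by
  by_cases hw : w.2 = 0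
  · by_cases hv : v.2 = 0
    · rw [hw, hv, mul_zero, mul_zero]
    · -- the point reflection `-γ` swaps the endpoints of the maximal chord
      have := h.neg.fst_mul_snd_eq_of_snd_ne_zero ht.neg.hasDerivAt hs.neg (by simpa using hv)
      simp only [Prod.fst_neg, Prod.snd_neg, neg_mul_neg] at this
      exact this.symm
  · exact h.fst_mul_snd_eq_of_snd_ne_zero hs.hasDerivAt ht hw

end IsMaxChord

theorem parallel_tangents_in_strip_general
    (γ : ℝ → ℝ × ℝ) (hper : ∀ t, γ (t + 1) = γ t)
    (hC1 : ContDiff ℝ 1 γ) (himm : ∀ t, deriv γ t ≠ 0) :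
    ∃ s t : ℝ, γ s ≠ γ t ∧ (γ s).2 = (γ t).2 ∧
      ∃ c : ℝ, c ≠ 0 ∧ deriv γ s = c • deriv γ t := by
  have hderiv (u : ℝ) : HasStrictDerivAt γ (deriv γ u) u :=
    hC1.contDiffAt.hasStrictDerivAt one_ne_zero
  have hK : IsCompact (range γ) :=
    Function.Periodic.compact_of_continuous hper one_ne_zero hC1.continuous
  obtain ⟨s, t, hst⟩ := hK.exists_isMaxChord
  obtain ⟨_, ⟨t₁, rfl⟩, htop⟩ :=
    hK.exists_isMaxOn (range_nonempty γ) continuous_snd.continuousOn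
  have hmax : IsLocalMax (fun u => (γ u).2) t₁ :=
    Eventually.of_forall fun u => htop (mem_range_self u)
  have hhoriz : (deriv γ t₁).2 = 0 := hmax.hasDerivAt_eq_zero (hderiv t₁).hasDerivAt.snd
  obtain ⟨u, v, huv, hne⟩ := exists_fst_ne_of_isLocalMax_snd hC1.continuous (hderiv t₁)
    (fun h => himm t₁ (Prod.ext h hhoriz)) hmax
  obtain ⟨c, hc⟩ := Prod.exists_eq_smul_of_mul_eq_mul (himm t)
    (hst.fst_mul_snd_eq (hderiv s) (hderiv t))
  exact ⟨s, t, hst.ne_of_fst_ne huv hne, hst.1, c, fun h0 => himm s (by simp [hc, h0]), hc⟩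

/-- A C¹ closed immersed curve in the horizontal strip 0 ≤ y ≤ 1 meeting
both boundary lines has two distinct points with the same y-coordinate (i.e. on the same
horizontal leaf) at which the tangent lines are parallel. -/
theorem parallel_tangents_in_strip
    (γ : ℝ → ℝ × ℝ) (hper : ∀ t, γ (t + 1) = γ t)
    (hC1 : ContDiff ℝ 1 γ) (himm : ∀ t, deriv γ t ≠ 0)
    (hstrip : ∀ t, (γ t).2 ∈ Set.Icc (0 : ℝ) 1)
    (hbot : ∃ t, (γ t).2 = 0) (htop : ∃ t, (γ t).2 = 1) :
    ∃ s t : ℝ, γ s ≠ γ t ∧ (γ s).2 = (γ t).2 ∧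
      ∃ c : ℝ, c ≠ 0 ∧ deriv γ s = c • deriv γ t :=
  parallel_tangents_in_strip_general γ hper hC1 himm
end
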